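/- For all integers n and r with n ≥ r ≥ 2, f(n, r) < 6·(n−1)^{n−1}. -/

import Mathlib

/-- `f(n, r) = ∑ i₁^{i₁} ⋯ i_r^{i_r}`, the sum running over ordered `r`-tuples of
positive integers with `i₁ + ⋯ + i_r = n`. -/
def fnr (n r : ℕ) : ℕ :=
  ∑ i ∈ (Finset.Nat.antidiagonalTuple r n).filter (fun i => ∀ j, 0 < i j),
    ∏ j, (i j) ^ (i j)

/-! The map `x ↦ x log x` is convex, so `k ↦ k ^ k` is log-convex: among the products
`a ^ a * b ^ b` with `a + b` fixed and `a, b ≥ j`, the most lopsided one is the largest. Hence in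
`f(n, 2) = ∑ k ^ k (n - k) ^ (n - k)` the terms `k ∈ {1, n - 1}` give `2 (n - 1) ^ (n - 1)`,
those with `k ∈ {2, n - 2}` give `8 (n - 2) ^ (n - 2)`, and each of the others is at most
`3 ^ 3 (n - 3) ^ (n - 3)`; Bernoulli's inequality `m ^ m ≥ 2 m (m - 1) ^ (m - 1)` absorbs the last
two groups into one more `(n - 1) ^ (n - 1)` once `n ≥ 9`, and smaller `n` are checked directly.
Splitting off the first part of a composition and inducting on `r` then gives
`f(n + 1, r + 1) ≤ 6 f(n, 2) < 6 n ^ n`. -/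

open Finset Real

lemma add_le_add_of_monotone_sub {α : Type*} [AddCommGroup α] [PartialOrder α]
    [IsOrderedAddMonoid α] {f : ℕ → α} (hf : Monotone fun n => f (n + 1) - f n) {j b : ℕ}
    (hjb : j ≤ b) (t : ℕ) : f (j + t) + f b ≤ f j + f (b + t) := by
  induction t with
  | zero => simp
  | succ t ih =>
    have step : f (j + t + 1) - f (j + t) ≤ f (b + t + 1) - f (b + t) := hf (by omega)
    rw [← add_assoc, ← add_assoc]
    rw [← sub_nonneg] at step ih ⊢
    convert add_nonneg step ih using 1
    abel

lemma monotone_natCast_mul_log_sub :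
    Monotone fun n : ℕ => ((n + 1 : ℕ) : ℝ) * log (n + 1 : ℕ) - n * log n := by
  refine monotone_nat_of_le_succ fun n => ?_
  have h := convexOn_mul_log.slope_mono_adjacent (x := n) (y := n + 1) (z := n + 2)
    (by simp) (by simp; positivity) (by linarith) (by linarith)
  push_cast
  norm_num [add_assoc] at h ⊢
  linarith

lemma natCast_pow_self_eq_exp (k : ℕ) : ((k ^ k : ℕ) : ℝ) = exp (k * log k) := by
  rcases k.eq_zero_or_pos with rfl | hk
  · simp
  · rw [← log_pow, exp_log (by positivity)]
    push_cast; rfl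

lemma pow_self_mul_pow_self_le {j b : ℕ} (hjb : j ≤ b) (t : ℕ) :
    (j + t) ^ (j + t) * b ^ b ≤ j ^ j * (b + t) ^ (b + t) := by
  have h := add_le_add_of_monotone_sub (f := fun n : ℕ => (n : ℝ) * log n)
    monotone_natCast_mul_log_sub hjb t
  rw [← Nat.cast_le (α := ℝ)]
  simp only [Nat.cast_mul, natCast_pow_self_eq_exp, ← exp_add, exp_le_exp]
  exact_mod_cast h

lemma pow_self_mul_pow_self_le_of_le {a b j : ℕ} (ha : j ≤ a) (hb : j ≤ b) :
    a ^ a * b ^ b ≤ j ^ j * (a + b - j) ^ (a + b - j) := by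
  wlog hab : a ≤ b generalizing a b
  · rw [mul_comm, add_comm]
    exact this hb ha (by omega)
  have h := pow_self_mul_pow_self_le hb (a - j)
  rwa [Nat.add_sub_cancel' ha, ← Nat.add_sub_assoc ha, add_comm b] at h

lemma two_mul_pow_self_le_succ_pow {m : ℕ} (hm : m ≠ 0) : 2 * m ^ m ≤ (m + 1) ^ m := by
  have h := pow_add_mul_le_add_pow (a := m) (b := 1) (by positivity) (by positivity) m
  rwa [mul_one, Nat.cast_id, mul_pow_sub_one hm, ← two_mul] at h

lemma two_mul_succ_mul_pow_self_le {m : ℕ} (hm : m ≠ 0) :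
    2 * (m + 1) * m ^ m ≤ (m + 1) ^ (m + 1) := by
  rw [pow_succ']
  nlinarith [two_mul_pow_self_le_succ_pow hm]

lemma sum_Ico_pow_self_mul_pow_self_le (n : ℕ) :
    ∑ k ∈ Ico 1 n, k ^ k * (n - k) ^ (n - k) ≤ 3 * (n - 1) ^ (n - 1) := by
  rcases lt_or_ge n 9 with hn | hn
  · interval_cases n <;> decide
  obtain ⟨m, rfl⟩ : ∃ m, n = m + 9 := ⟨n - 9, by omega⟩
  set f := fun k => k ^ k * (m + 9 - k) ^ (m + 9 - k)
  have middle : ∑ k ∈ Ico 3 (m + 7), f k ≤ (m + 4) * (27 * (m + 6) ^ (m + 6)) := by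
    simpa using sum_le_card_nsmul (Ico 3 (m + 7)) f _ fun k hk => by
      rw [mem_Ico] at hk
      simpa [show k + (m + 9 - k) - 3 = m + 6 by omega] using
        pow_self_mul_pow_self_le_of_le (a := k) (b := m + 9 - k) (j := 3) (by omega) (by omega)
  have left : ∑ k ∈ Ico 1 3, f k = (m + 8) ^ (m + 8) + 4 * (m + 7) ^ (m + 7) := by
    simp [sum_Ico_eq_sum_range, sum_range_succ, f]
  have right : ∑ k ∈ Ico (m + 7) (m + 9), f k = 4 * (m + 7) ^ (m + 7) + (m + 8) ^ (m + 8) := by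
    simp [sum_Ico_eq_sum_range, sum_range_succ, f, mul_comm]
  rw [← sum_Ico_consecutive f (show 1 ≤ 3 by omega) (show 3 ≤ m + 9 by omega),
    ← sum_Ico_consecutive f (show 3 ≤ m + 7 by omega) (show m + 7 ≤ m + 9 by omega),
    left, right, show m + 9 - 1 = m + 8 by omega]
  have hC : 2 * (m + 8) * (m + 7) ^ (m + 7) ≤ (m + 8) ^ (m + 8) :=
    two_mul_succ_mul_pow_self_le (by omega)
  have hB : 2 * (m + 7) * (m + 6) ^ (m + 6) ≤ (m + 7) ^ (m + 7) :=
    two_mul_succ_mul_pow_self_le (by omega)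
  set A := (m + 6) ^ (m + 6)
  set B := (m + 7) ^ (m + 7)
  set C := (m + 8) ^ (m + 8)
  -- `C ≥ 2 (m + 8) B = 8 B + 2 (m + 4) B` and `2 (m + 4) B ≥ 4 (m + 4) (m + 7) A`
  nlinarith [Nat.mul_le_mul_left (m + 4) hB, Nat.zero_le (m * m * A), Nat.zero_le (m * A)]

lemma fnr_eq_zero_of_lt {n r : ℕ} (h : n < r) : fnr n r = 0 := by
  refine sum_eq_zero fun i hi => absurd h (not_lt.2 ?_)
  rw [mem_filter, Nat.mem_antidiagonalTuple] at hi
  calc r = ∑ _j : Fin r, 1 := by simp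
    _ ≤ ∑ j, i j := sum_le_sum fun j _ => hi.2 j
    _ = n := hi.1

lemma fnr_one {n : ℕ} (hn : 0 < n) : fnr n 1 = n ^ n := by
  simp [fnr, Nat.antidiagonalTuple_one, filter_singleton, hn]

lemma fnr_succ (n r : ℕ) :
    fnr n (r + 1) = ∑ p ∈ antidiagonal n, fnr p.1 1 * fnr p.2 r := by
  have split : ∀ p ∈ antidiagonal n, fnr p.1 1 * fnr p.2 r = if 0 < p.1 then
      ∑ i ∈ (Nat.antidiagonalTuple r p.2).filter (fun i => ∀ j, 0 < i j),
        p.1 ^ p.1 * ∏ j, i j ^ i j else 0 := by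
    intro p _
    split_ifs with hp
    · rw [fnr_one hp, fnr, mul_sum]
    · rw [fnr_eq_zero_of_lt (by omega), zero_mul]
  rw [sum_congr rfl split, ← sum_filter, sum_sigma', fnr]
  refine sum_nbij' (fun i => ⟨(i 0, n - i 0), Fin.tail i⟩) (fun x => Fin.cons x.1.1 x.2)
    ?_ ?_ ?_ ?_ ?_
  · intro i hi
    simp only [mem_sigma, mem_filter, HasAntidiagonal.mem_antidiagonal,
      Nat.mem_antidiagonalTuple, Fin.sum_univ_succ] at hi ⊢
    obtain ⟨hsum, hpos⟩ := hi
    exact ⟨⟨by omega, hpos 0⟩, by simp only [Fin.tail]; omega, fun j => hpos j.succ⟩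
  · intro x hx
    simp only [mem_sigma, mem_filter, HasAntidiagonal.mem_antidiagonal,
      Nat.mem_antidiagonalTuple, Fin.sum_cons, Fin.forall_fin_succ, Fin.cons_zero,
      Fin.cons_succ] at hx ⊢
    obtain ⟨⟨hsum, hpos⟩, hsum', hpos'⟩ := hx
    exact ⟨by omega, hpos, hpos'⟩
  · intro i _
    exact Fin.cons_self_tail i
  · rintro ⟨⟨k, m⟩, i⟩ hx
    simp only [mem_sigma, mem_filter, HasAntidiagonal.mem_antidiagonal] at hx
    simp only [Fin.cons_zero, Fin.tail_cons, show n - k = m by omega]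
  · intro i _
    rw [Fin.prod_univ_succ]
    rfl

lemma fnr_two (n : ℕ) : fnr n 2 = ∑ k ∈ Ico 1 n, k ^ k * (n - k) ^ (n - k) := by
  rw [fnr_succ, Nat.sum_antidiagonal_eq_sum_range_succ_mk]
  symm
  refine sum_subset_zero_on_sdiff (fun k hk => ?_) (fun k hk => ?_) (fun k hk => ?_)
  · simp only [mem_Ico, mem_range] at hk ⊢
    omega
  · simp only [mem_sdiff, mem_Ico, mem_range] at hk
    rcases Nat.eq_zero_or_pos k with rfl | hk0
    · rw [fnr_eq_zero_of_lt one_pos, zero_mul]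
    · rw [show n - k = 0 by omega, fnr_eq_zero_of_lt one_pos, mul_zero]
  · rw [mem_Ico] at hk
    rw [fnr_one (by omega), fnr_one (by omega)]

lemma fnr_two_le (n : ℕ) : fnr n 2 ≤ 3 * (n - 1) ^ (n - 1) :=
  fnr_two n ▸ sum_Ico_pow_self_mul_pow_self_le n

lemma fnr_two_lt_pow_self (n : ℕ) : fnr n 2 < n ^ n := by
  rcases lt_or_ge n 2 with hn | hn
  · rw [fnr_eq_zero_of_lt hn]
    exact Nat.pow_self_pos
  obtain ⟨m, rfl⟩ : ∃ m, n = m + 1 := ⟨n - 1, by omega⟩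
  have hm : 0 < m ^ m := Nat.pow_self_pos
  calc fnr (m + 1) 2 ≤ 3 * m ^ m := fnr_two_le (m + 1)
    _ < 2 * (m + 1) * m ^ m := by nlinarith
    _ ≤ (m + 1) ^ (m + 1) := two_mul_succ_mul_pow_self_le (by omega)

lemma fnr_succ_lt {r : ℕ} (hr : 2 ≤ r) (n : ℕ) : fnr (n + 1) r < 6 * n ^ n := by
  induction r, hr using Nat.le_induction generalizing n with
  | base =>
    have hn : 0 < n ^ n := Nat.pow_self_pos
    calc fnr (n + 1) 2 ≤ 3 * n ^ n := fnr_two_le (n + 1)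
      _ < 6 * n ^ n := by omega
  | succ r hr ih =>
    have shift : ∀ m, fnr (m + 1) r ≤ 6 * fnr m 1 := by
      rintro (_ | m)
      · rw [fnr_eq_zero_of_lt (by omega)]
        exact Nat.zero_le _
      · rw [fnr_one m.succ_pos]
        exact (ih (m + 1)).le
    calc fnr (n + 1) (r + 1) = ∑ p ∈ antidiagonal n, fnr p.1 1 * fnr (p.2 + 1) r := by
          rw [fnr_succ, Nat.sum_antidiagonal_succ', fnr_eq_zero_of_lt (n := 0) (by omega),
            mul_zero, zero_add]
      _ ≤ ∑ p ∈ antidiagonal n, fnr p.1 1 * (6 * fnr p.2 1) := by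
          gcongr with p
          exact shift _
      _ = 6 * fnr n 2 := by
          rw [fnr_succ, mul_sum]
          exact sum_congr rfl fun p _ => by ring
      _ < 6 * n ^ n := by
          have := fnr_two_lt_pow_self n
          omega

/-- For all `n ≥ r ≥ 2`, `f(n, r) < 6 (n-1)^{n-1}`. -/
theorem fnr_lt (n r : ℕ) (hr : 2 ≤ r) (hn : r ≤ n) :
    fnr n r < 6 * (n - 1) ^ (n - 1) := by
  obtain ⟨m, rfl⟩ : ∃ m, n = m + 1 := ⟨n - 1, by omega⟩
  simpa using fnr_succ_lt hr m
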